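/- arXiv:2002.00310 — 4 statements merged into one kernel-verified Lean document; each statement's English description precedes it below -/
import Mathlib

section
/- For all x ≥ 0, the standard normal tail satisfies (1/(√(2π)(1+x))) · e^{-x²/2} ≤ 1 - Φ(x) ≤ (1/(√π (1+x))) · e^{-x²/2}, where Φ is the standard normal CDF. -/
open MeasureTheory Real Set Filter

/-- The standard normal cumulative distribution function. -/
noncomputable def Phi (x : ℝ) : ℝ :=
  ∫ t in Set.Iic x, Real.exp (-t ^ 2 / 2) / Real.sqrt (2 * Real.pi)

lemma phi_integrable : Integrable (fun t : ℝ => Real.exp (-t ^ 2 / 2)) := by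
  have := integrable_exp_neg_mul_sq (b := (1/2 : ℝ)) (by norm_num)
  convert this using 2 with t
  ring_nf

lemma integral_phi : ∫ t : ℝ, Real.exp (-t ^ 2 / 2) = Real.sqrt (2 * Real.pi) := by
  have := integral_gaussian (1/2 : ℝ)
  have h2 : ∀ t : ℝ, -t ^ 2 / 2 = -(1/2 : ℝ) * t ^ 2 := fun t => by ring
  simp_rw [h2]
  rw [this]
  congr 1
  rw [div_div_eq_mul_div, div_one, mul_comm]

/-- derivative facts for `f t = -exp(-t^2/2) * (1+t)⁻¹` -/
lemma hasDerivAt_aux (t : ℝ) (ht : t ≠ -1) :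
    HasDerivAt (fun t : ℝ => -(Real.exp (-t ^ 2 / 2) * (1 + t)⁻¹))
      (Real.exp (-t ^ 2 / 2) * (t * (1 + t)⁻¹ + (1 + t)⁻¹ ^ 2)) t := by
  have h1 : HasDerivAt (fun t : ℝ => Real.exp (-t ^ 2 / 2)) (Real.exp (-t ^ 2 / 2) * (-t)) t := by
    have : HasDerivAt (fun t : ℝ => -t ^ 2 / 2) (-t) t := by
      have := (hasDerivAt_pow 2 t).neg.div_const 2
      refine this.congr_deriv ?_; push_cast; ring
    exact (Real.hasDerivAt_exp _).comp t this
  have h2 : HasDerivAt (fun t : ℝ => (1 + t)⁻¹) (-((1 + t)⁻¹ ^ 2)) t := by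
    have hne : 1 + t ≠ 0 := fun h => ht (by linarith)
    have := ((hasDerivAt_id t).const_add 1).inv hne
    refine this.congr_deriv ?_
    simp only [id]; field_simp
  have := (h1.mul h2).neg
  refine this.congr_deriv ?_
  field_simp
  ring

lemma tail_eq (x : ℝ) : 1 - Phi x =
    (∫ t in Set.Ioi x, Real.exp (-t ^ 2 / 2)) / Real.sqrt (2 * Real.pi) := by
  have hπ : (0:ℝ) < Real.sqrt (2 * Real.pi) :=
    Real.sqrt_pos.mpr (by positivity)
  have hsplit : Phi x + (∫ t in Set.Ioi x, Real.exp (-t ^ 2 / 2)) / Real.sqrt (2 * Real.pi)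
      = 1 := by
    unfold Phi
    rw [div_eq_mul_inv, ← MeasureTheory.integral_mul_const]
    simp_rw [← div_eq_mul_inv]
    rw [intervalIntegral.integral_Iic_add_Ioi (phi_integrable.div_const _).integrableOn
      (phi_integrable.div_const _).integrableOn]
    rw [MeasureTheory.integral_div, integral_phi, div_self hπ.ne']
  linarith

lemma key_integral (x : ℝ) (hx : 0 ≤ x) :
    ∫ t in Set.Ioi x, Real.exp (-t ^ 2 / 2) * (t * (1 + t)⁻¹ + (1 + t)⁻¹ ^ 2)
      = Real.exp (-x ^ 2 / 2) * (1 + x)⁻¹ := by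
  have hne : ∀ t : ℝ, x ≤ t → t ≠ -1 := fun t ht h => by linarith
  have hcont : ContinuousWithinAt (fun t : ℝ => -(Real.exp (-t ^ 2 / 2) * (1 + t)⁻¹))
      (Set.Ici x) x :=
    ((hasDerivAt_aux x (hne x le_rfl)).continuousAt).continuousWithinAt
  have hint : IntegrableOn
      (fun t : ℝ => Real.exp (-t ^ 2 / 2) * (t * (1 + t)⁻¹ + (1 + t)⁻¹ ^ 2)) (Set.Ioi x) := by
    apply Integrable.mono' (g := fun t : ℝ => 2 * Real.exp (-t ^ 2 / 2))
      ((phi_integrable.const_mul 2).integrableOn)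
    · apply ContinuousOn.aestronglyMeasurable _ measurableSet_Ioi
      apply ContinuousOn.mul (Continuous.continuousOn (by continuity))
      apply ContinuousOn.add
      · exact ContinuousOn.mul continuousOn_id (ContinuousOn.inv₀
          (Continuous.continuousOn (by continuity)) (fun t ht => by
            have : x < t := ht
            intro h; linarith))
      · exact ContinuousOn.pow (ContinuousOn.inv₀
          (Continuous.continuousOn (by continuity)) (fun t ht => by
            have : x < t := ht
            intro h; linarith)) 2
    · filter_upwards [MeasureTheory.ae_restrict_mem measurableSet_Ioi] with t ht
      have htx : x < t := ht
      have ht0 : (0:ℝ) ≤ t := le_trans hx htx.le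
      have h1t : (0:ℝ) < 1 + t := by linarith
      have h1 : t * (1 + t)⁻¹ ≤ 1 := by
        rw [mul_inv_le_iff₀ h1t]; linarith
      have h2 : (1 + t)⁻¹ ^ 2 ≤ 1 := by
        have : (1 + t)⁻¹ ≤ 1 := by
          rw [inv_le_one_iff₀]; right; linarith
        nlinarith [inv_pos.mpr h1t]
      have hpos : 0 ≤ t * (1 + t)⁻¹ + (1 + t)⁻¹ ^ 2 := by positivity
      rw [Real.norm_eq_abs, abs_of_nonneg (by positivity)]
      nlinarith [Real.exp_pos (-t ^ 2 / 2)]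
  have htend : Tendsto (fun t : ℝ => -(Real.exp (-t ^ 2 / 2) * (1 + t)⁻¹)) atTop (nhds 0) := by
    have h1 : Tendsto (fun t : ℝ => Real.exp (-t ^ 2 / 2)) atTop (nhds 0) := by
      apply Real.tendsto_exp_atBot.comp
      apply Filter.Tendsto.atBot_div_const (by norm_num : (0:ℝ) < 2)
      exact tendsto_neg_atBot_iff.mpr (tendsto_pow_atTop two_ne_zero)
    have h2 : Tendsto (fun t : ℝ => (1 + t)⁻¹) atTop (nhds 0) := by
      apply Filter.Tendsto.inv_tendsto_atTop
      exact tendsto_atTop_add_const_left _ 1 tendsto_id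
    have := (h1.mul h2).neg
    simpa using this
  have := MeasureTheory.integral_Ioi_of_hasDerivAt_of_tendsto hcont
    (fun t ht => hasDerivAt_aux t (hne t (le_of_lt ht))) hint htend
  rw [this]; ring

lemma aux_integrable (x : ℝ) (hx : 0 ≤ x) :
    IntegrableOn
      (fun t : ℝ => Real.exp (-t ^ 2 / 2) * (t * (1 + t)⁻¹ + (1 + t)⁻¹ ^ 2)) (Set.Ioi x) := by
  apply Integrable.mono' (g := fun t : ℝ => 2 * Real.exp (-t ^ 2 / 2))
    ((phi_integrable.const_mul 2).integrableOn)
  · apply ContinuousOn.aestronglyMeasurable _ measurableSet_Ioi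
    apply ContinuousOn.mul (Continuous.continuousOn (by continuity))
    apply ContinuousOn.add
    · exact ContinuousOn.mul continuousOn_id (ContinuousOn.inv₀
        (Continuous.continuousOn (by continuity)) (fun t ht => by
          have : x < t := ht
          intro h; linarith))
    · exact ContinuousOn.pow (ContinuousOn.inv₀
        (Continuous.continuousOn (by continuity)) (fun t ht => by
          have : x < t := ht
          intro h; linarith)) 2
  · filter_upwards [MeasureTheory.ae_restrict_mem measurableSet_Ioi] with t ht
    have htx : x < t := ht
    have ht0 : (0:ℝ) ≤ t := le_trans hx htx.le
    have h1t : (0:ℝ) < 1 + t := by linarith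
    have h1 : t * (1 + t)⁻¹ ≤ 1 := by
      rw [mul_inv_le_iff₀ h1t]; linarith
    have h2 : (1 + t)⁻¹ ^ 2 ≤ 1 := by
      have : (1 + t)⁻¹ ≤ 1 := by
        rw [inv_le_one_iff₀]; right; linarith
      nlinarith [inv_pos.mpr h1t]
    have hpos : 0 ≤ t * (1 + t)⁻¹ + (1 + t)⁻¹ ^ 2 := by positivity
    rw [Real.norm_eq_abs, abs_of_nonneg (by positivity)]
    nlinarith [Real.exp_pos (-t ^ 2 / 2)]

theorem gaussian_tail_bounds (x : ℝ) (hx : 0 ≤ x) :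
    1 / (Real.sqrt (2 * Real.pi) * (1 + x)) * Real.exp (-x ^ 2 / 2) ≤ 1 - Phi x ∧
    1 - Phi x ≤ 1 / (Real.sqrt Real.pi * (1 + x)) * Real.exp (-x ^ 2 / 2) := by
  have hπ : (0:ℝ) < Real.sqrt (2 * Real.pi) := Real.sqrt_pos.mpr (by positivity)
  have hsπ : (0:ℝ) < Real.sqrt Real.pi := Real.sqrt_pos.mpr Real.pi_pos
  have h1x : (0:ℝ) < 1 + x := by linarith
  have hs2 : Real.sqrt 2 ^ 2 = 2 := Real.sq_sqrt (by norm_num)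
  have hs2a : (1:ℝ) ≤ Real.sqrt 2 := by nlinarith [Real.sqrt_nonneg 2]
  have hs2b : Real.sqrt 2 ≤ 3/2 := by nlinarith [Real.sqrt_nonneg 2]
  have hkey := key_integral x hx
  have hintI : IntegrableOn (fun t : ℝ => Real.exp (-t ^ 2 / 2)) (Set.Ioi x) :=
    phi_integrable.integrableOn
  have hintD := aux_integrable x hx
  -- pointwise facts
  have bracket : ∀ t ∈ Set.Ioi x,
      Real.exp (-t ^ 2 / 2) * (t * (1 + t)⁻¹ + (1 + t)⁻¹ ^ 2) ≤ Real.exp (-t ^ 2 / 2) := by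
    intro t ht
    have htx : x < t := ht
    have ht0 : (0:ℝ) ≤ t := le_trans hx htx.le
    have h1t : (0:ℝ) < 1 + t := by linarith
    have hu0 : (0:ℝ) < (1 + t)⁻¹ := inv_pos.mpr h1t
    have hu1 : (1 + t)⁻¹ ≤ 1 := by
      rw [inv_le_one_iff₀]; right; linarith
    have htu : t * (1 + t)⁻¹ = 1 - (1 + t)⁻¹ := by field_simp; ring
    have hb : t * (1 + t)⁻¹ + (1 + t)⁻¹ ^ 2 ≤ 1 := by
      rw [htu]; nlinarith
    exact mul_le_of_le_one_right (Real.exp_pos _).le hb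
  have bracket2 : ∀ t ∈ Set.Ioi x, Real.exp (-t ^ 2 / 2) ≤
      Real.sqrt 2 * (Real.exp (-t ^ 2 / 2) * (t * (1 + t)⁻¹ + (1 + t)⁻¹ ^ 2)) := by
    intro t ht
    have htx : x < t := ht
    have ht0 : (0:ℝ) ≤ t := le_trans hx htx.le
    have h1t : (0:ℝ) < 1 + t := by linarith
    have hu : (1 + t) * (1 + t)⁻¹ = 1 := mul_inv_cancel₀ h1t.ne'
    have hpoly : (1 + t) ^ 2 ≤ Real.sqrt 2 * (t * (1 + t) + 1) := by
      nlinarith [sq_nonneg (2 * (Real.sqrt 2 - 1) * t + (Real.sqrt 2 - 2))]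
    have hu2 : (0:ℝ) ≤ (1 + t)⁻¹ ^ 2 := by positivity
    have := mul_le_mul_of_nonneg_right hpoly hu2
    have hone : (1 + t) ^ 2 * (1 + t)⁻¹ ^ 2 = 1 := by
      rw [← mul_pow, hu]; norm_num
    have hbr : (t * (1 + t) + 1) * (1 + t)⁻¹ ^ 2 = t * (1 + t)⁻¹ + (1 + t)⁻¹ ^ 2 := by
      have : t * (1 + t) * (1 + t)⁻¹ ^ 2 = t * (1 + t)⁻¹ := by
        rw [pow_two]; field_simp
      rw [add_mul, this, one_mul]
    rw [hone, mul_assoc, hbr] at this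
    nlinarith [Real.exp_pos (-t ^ 2 / 2)]
  -- integral comparisons
  have hIlow : Real.exp (-x ^ 2 / 2) * (1 + x)⁻¹ ≤
      ∫ t in Set.Ioi x, Real.exp (-t ^ 2 / 2) := by
    rw [← hkey]
    exact MeasureTheory.setIntegral_mono_on hintD hintI measurableSet_Ioi bracket
  have hIhigh : (∫ t in Set.Ioi x, Real.exp (-t ^ 2 / 2)) ≤
      Real.sqrt 2 * (Real.exp (-x ^ 2 / 2) * (1 + x)⁻¹) := by
    rw [← hkey, ← MeasureTheory.integral_const_mul]
    exact MeasureTheory.setIntegral_mono_on hintI (hintD.const_mul _)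
      measurableSet_Ioi bracket2
  rw [tail_eq x]
  constructor
  · calc 1 / (Real.sqrt (2 * Real.pi) * (1 + x)) * Real.exp (-x ^ 2 / 2)
        = (Real.exp (-x ^ 2 / 2) * (1 + x)⁻¹) / Real.sqrt (2 * Real.pi) := by
          field_simp
      _ ≤ (∫ t in Set.Ioi x, Real.exp (-t ^ 2 / 2)) / Real.sqrt (2 * Real.pi) := by
          gcongr
  · have hsplit : Real.sqrt (2 * Real.pi) = Real.sqrt 2 * Real.sqrt Real.pi :=
      Real.sqrt_mul (by norm_num) _
    calc (∫ t in Set.Ioi x, Real.exp (-t ^ 2 / 2)) / Real.sqrt (2 * Real.pi)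
        ≤ (Real.sqrt 2 * (Real.exp (-x ^ 2 / 2) * (1 + x)⁻¹)) / Real.sqrt (2 * Real.pi) := by
          gcongr
      _ = 1 / (Real.sqrt Real.pi * (1 + x)) * Real.exp (-x ^ 2 / 2) := by
          rw [hsplit]
          have h2 : (0:ℝ) < Real.sqrt 2 := by linarith
          field_simp
end

section
/- There is a constant C > 0 such that for all x ≥ ln 2 and all ε ≥ 0, the ratio (1 - Φ(x(1-ε)))/(1 - Φ(x)) ≤ exp(C x² ε), where Φ is the standard normal CDF. -/
open MeasureTheory Real Set Filter
open scoped Topology ENNReal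

noncomputable def phi (t : ℝ) : ℝ := Real.exp (-t ^ 2 / 2) / Real.sqrt (2 * Real.pi)

lemma phi_pos (t : ℝ) : 0 < phi t := by
  apply div_pos (Real.exp_pos _)
  positivity

lemma phi_integrable_s1 : Integrable phi := by
  have h : Integrable (fun t : ℝ => Real.exp (-(1/2) * t ^ 2)) := integrable_exp_neg_mul_sq (by norm_num)
  have := h.div_const (Real.sqrt (2 * Real.pi))
  refine this.congr (Eventually.of_forall fun t => ?_)
  simp [phi]
  ring_nf

lemma integral_phi_s1 : ∫ t, phi t = 1 := by
  have h : ∫ t : ℝ, Real.exp (-(1/2) * t ^ 2) = Real.sqrt (Real.pi / (1/2)) := integral_gaussian (1/2)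
  have heq : ∀ t : ℝ, phi t = Real.exp (-(1/2) * t ^ 2) / Real.sqrt (2 * Real.pi) := by
    intro t; simp [phi]; ring_nf
  calc ∫ t, phi t = ∫ t : ℝ, Real.exp (-(1/2) * t ^ 2) / Real.sqrt (2 * Real.pi) := by
        simp_rw [heq]
    _ = (∫ t : ℝ, Real.exp (-(1/2) * t ^ 2)) / Real.sqrt (2 * Real.pi) := by
        rw [integral_div]
    _ = 1 := by
        rw [h]
        rw [div_eq_one_iff_eq (by positivity)]
        congr 1
        ring

lemma Phi_eq (x : ℝ) : Phi x = ∫ t in Set.Iic x, phi t := rfl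

lemma Q_eq (x : ℝ) : 1 - Phi x = ∫ t in Set.Ioi x, phi t := by
  have h := intervalIntegral.integral_Iic_add_Ioi (b := x) phi_integrable_s1.integrableOn phi_integrable_s1.integrableOn
  rw [integral_phi_s1] at h
  rw [Phi_eq]
  linarith

lemma Q_pos (x : ℝ) : 0 < 1 - Phi x := by
  rw [Q_eq]
  apply setIntegral_pos_iff_support_of_nonneg_ae (Eventually.of_forall fun t => (phi_pos t).le)
    phi_integrable_s1.integrableOn |>.2
  have : Function.support phi = univ := by
    ext t; simp [Function.support, (phi_pos t).ne']
  rw [this]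
  simp [Real.volume_Ioi]

lemma Phi_nonneg (x : ℝ) : 0 ≤ Phi x := by
  rw [Phi_eq]
  exact setIntegral_nonneg measurableSet_Iic fun t _ => (phi_pos t).le

lemma Q_split {y x : ℝ} (h : y ≤ x) :
    (1 - Phi y) = (∫ t in Set.Ioc y x, phi t) + (1 - Phi x) := by
  rw [Q_eq, Q_eq]
  rw [← setIntegral_union (Set.Ioc_disjoint_Ioi le_rfl) measurableSet_Ioi
    phi_integrable_s1.integrableOn phi_integrable_s1.integrableOn]
  rw [Set.Ioc_union_Ioi_eq_Ioi h]

lemma phi_anti {a b : ℝ} (ha : 0 ≤ a) (hab : a ≤ b) : phi b ≤ phi a := by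
  apply div_le_div_of_nonneg_right _ (by positivity)
  · exact Real.exp_le_exp.2 (by nlinarith)

lemma seg_upper {y x : ℝ} (hy : 0 ≤ y) (h : y ≤ x) :
    (∫ t in Set.Ioc y x, phi t) ≤ (x - y) * phi y := by
  have : (∫ t in Set.Ioc y x, phi t) ≤ ∫ _ in Set.Ioc y x, phi y := by
    apply setIntegral_mono_on phi_integrable_s1.integrableOn (integrableOn_const (by
      simp [Real.volume_Ioc, ENNReal.ofReal_lt_top])) measurableSet_Ioc
    intro t ht
    exact phi_anti hy ht.1.le
  refine this.trans_eq ?_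
  rw [setIntegral_const]
  simp [Real.volume_Ioc, ENNReal.toReal_ofReal (by linarith : (0:ℝ) ≤ x - y)]
  exact Or.inl h

lemma seg_lower {a b : ℝ} (ha : 0 ≤ a) (h : a ≤ b) :
    (b - a) * phi b ≤ ∫ t in Set.Ioc a b, phi t := by
  have : (∫ _ in Set.Ioc a b, phi b) ≤ ∫ t in Set.Ioc a b, phi t := by
    apply setIntegral_mono_on (integrableOn_const (by
      simp [Real.volume_Ioc, ENNReal.ofReal_lt_top])) phi_integrable_s1.integrableOn
      measurableSet_Ioc
    intro t ht
    exact phi_anti (le_trans ha ht.1.le) ht.2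
  refine le_trans ?_ this
  rw [setIntegral_const]
  simp [Real.volume_Ioc, ENNReal.toReal_ofReal (by linarith : (0:ℝ) ≤ b - a)]
  rw [max_eq_left (by linarith)]

lemma Q_lower {x : ℝ} (hx : 0 ≤ x) :
    Real.exp (-x ^ 2 / 2 - 3/2) / (Real.sqrt (2 * Real.pi) * (1 + x)) ≤ 1 - Phi x := by
  set δ := 1 / (1 + x) with hδ
  have h1x : 0 < 1 + x := by linarith
  have hδpos : 0 < δ := by positivity
  have h1 : (1 - Phi x) = (∫ t in Set.Ioc x (x + δ), phi t) + (1 - Phi (x + δ)) :=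
    Q_split (by linarith)
  have h2 := seg_lower hx (show x ≤ x + δ by linarith)
  have h3 := Q_pos (x + δ)
  have h4 : Real.exp (-x ^ 2 / 2 - 3/2) / (Real.sqrt (2 * Real.pi) * (1 + x)) ≤ δ * phi (x + δ) := by
    rw [hδ]
    rw [phi]
    rw [div_le_iff₀ (by positivity)]
    have hexp : -x ^ 2 / 2 - 3/2 ≤ -(x + 1/(1+x)) ^ 2 / 2 := by
      have h5 : (x + 1/(1+x)) ^ 2 = x ^ 2 + 2 * x / (1 + x) + (1/(1+x)) ^ 2 := by
        field_simp; ring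
      have h6 : 2 * x / (1 + x) ≤ 2 := by
        rw [div_le_iff₀ h1x]; linarith
      have h7 : (1/(1+x)) ^ 2 ≤ 1 := by
        have : 1/(1+x) ≤ 1 := by rw [div_le_one h1x]; linarith
        nlinarith [sq_nonneg (1/(1+x))]
      nlinarith
    calc Real.exp (-x ^ 2 / 2 - 3/2) ≤ Real.exp (-(x + 1/(1+x)) ^ 2 / 2) := Real.exp_le_exp.2 hexp
      _ = 1 / (1 + x) * (Real.exp (-(x + 1/(1+x)) ^ 2 / 2) / Real.sqrt (2 * Real.pi)) *
            (Real.sqrt (2 * Real.pi) * (1 + x)) := by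
          field_simp
      _ = _ := by ring
  linarith

lemma sqrt_two_pi_le : Real.sqrt (2 * Real.pi) ≤ Real.exp 1 := by
  have h1 : (2 * Real.pi) ≤ (Real.exp 1) ^ 2 := by
    nlinarith [Real.exp_one_gt_d9, Real.pi_lt_d2]
  calc Real.sqrt (2 * Real.pi) ≤ Real.sqrt ((Real.exp 1) ^ 2) := Real.sqrt_le_sqrt h1
    _ = Real.exp 1 := Real.sqrt_sq (Real.exp_pos 1).le

lemma exp_three_half_le : Real.exp (3/2) ≤ 4.5 := by
  have h1 : Real.exp (3/2) * Real.exp (3/2) = Real.exp 1 * Real.exp 1 * Real.exp 1 := by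
    rw [← Real.exp_add, ← Real.exp_add, ← Real.exp_add]; norm_num
  nlinarith [Real.exp_one_lt_d9, Real.exp_pos (3/2 : ℝ), Real.exp_pos 1]

theorem tail_ratio_upper :
    ∃ C : ℝ, 0 < C ∧ ∀ x : ℝ, Real.log 2 ≤ x → ∀ ε : ℝ, 0 ≤ ε →
      (1 - Phi (x * (1 - ε))) / (1 - Phi x) ≤ Real.exp (C * x ^ 2 * ε) := by
  refine ⟨20, by norm_num, fun x hx ε hε => ?_⟩
  have hlog2 : (0.693 : ℝ) ≤ Real.log 2 := by
    have := Real.log_two_gt_d9; norm_num at this ⊢; linarith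
  have hx0 : (0.693 : ℝ) ≤ x := le_trans hlog2 hx
  have hxpos : (0:ℝ) < x := by linarith
  have hQx := Q_pos x
  rw [div_le_iff₀ hQx]
  have hL := Q_lower hxpos.le
  have h1x : (0:ℝ) < 1 + x := by linarith
  have hu0 : 0 ≤ 20 * x ^ 2 * ε := by positivity
  by_cases hε1 : 1 ≤ ε
  · -- large ε : use 1 - Phi y ≤ 1
    have hy1 : 1 - Phi (x * (1 - ε)) ≤ 1 := by linarith [Phi_nonneg (x * (1 - ε))]
    refine hy1.trans ?_
    have key : Real.sqrt (2 * Real.pi) * (1 + x) ≤ Real.exp (20 * x ^ 2 * ε + (-x ^ 2 / 2 - 3/2)) := by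
      have hax : (1 : ℝ) + x ≤ Real.exp x := by
        have := Real.add_one_le_exp x; linarith
      have h2 : Real.sqrt (2 * Real.pi) * (1 + x) ≤ Real.exp 1 * Real.exp x :=
        mul_le_mul sqrt_two_pi_le hax h1x.le (Real.exp_pos 1).le
      rw [← Real.exp_add] at h2
      refine h2.trans (Real.exp_le_exp.2 ?_)
      have h3 : 20 * x ^ 2 ≤ 20 * x ^ 2 * ε := by nlinarith
      nlinarith [sq_nonneg (x - 0.693)]
    have key2 : 1 ≤ Real.exp (20 * x ^ 2 * ε) *
        (Real.exp (-x ^ 2 / 2 - 3/2) / (Real.sqrt (2 * Real.pi) * (1 + x))) := by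
      rw [mul_div_assoc', one_le_div (by positivity), ← Real.exp_add]
      exact key
    calc (1:ℝ) ≤ _ := key2
      _ ≤ Real.exp (20 * x ^ 2 * ε) * (1 - Phi x) :=
          mul_le_mul_of_nonneg_left hL (Real.exp_pos _).le
  · push_neg at hε1
    set y := x * (1 - ε) with hy
    have hy0 : 0 ≤ y := by nlinarith
    have hyx : y ≤ x := by nlinarith
    have hsplit := Q_split hyx
    have hS : (∫ t in Set.Ioc y x, phi t) ≤ (x - y) * phi y := seg_upper hy0 hyx
    set v := x ^ 2 * ε with hv
    have hv0 : 0 ≤ v := by positivity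
    -- core numeric inequality
    have hcore : (x - y) * phi y ≤ (Real.exp (20 * x ^ 2 * ε) - 1) *
        (Real.exp (-x ^ 2 / 2 - 3/2) / (Real.sqrt (2 * Real.pi) * (1 + x))) := by
      have hxy : x - y = x * ε := by rw [hy]; ring
      have hA : x * ε * (1 + x) ≤ (8/3) * v := by
        rw [hv]; nlinarith [mul_nonneg (mul_nonneg hxpos.le hε) (by linarith : (0:ℝ) ≤ 5/3 * x - 1)]
      have hB : Real.exp (-y ^ 2 / 2) ≤ 4.5 * Real.exp (v + (-x ^ 2 / 2 - 3/2)) := by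
        have h5 : -y ^ 2 / 2 ≤ v + (-x ^ 2 / 2) := by
          rw [hy, hv]; nlinarith [mul_nonneg (sq_nonneg x) (mul_nonneg hε hε)]
        calc Real.exp (-y ^ 2 / 2) ≤ Real.exp (v + (-x ^ 2 / 2)) := Real.exp_le_exp.2 h5
          _ = Real.exp (3/2) * Real.exp (v + (-x ^ 2 / 2 - 3/2)) := by
              rw [← Real.exp_add]; ring_nf
          _ ≤ 4.5 * Real.exp (v + (-x ^ 2 / 2 - 3/2)) :=
              mul_le_mul_of_nonneg_right exp_three_half_le (Real.exp_pos _).le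
      have hprod : x * ε * (1 + x) * Real.exp (-y ^ 2 / 2) ≤
          12 * v * Real.exp (v + (-x ^ 2 / 2 - 3/2)) := by
        calc x * ε * (1 + x) * Real.exp (-y ^ 2 / 2)
            ≤ ((8/3) * v) * (4.5 * Real.exp (v + (-x ^ 2 / 2 - 3/2))) :=
              mul_le_mul hA hB (Real.exp_pos _).le (by positivity)
          _ = 12 * v * Real.exp (v + (-x ^ 2 / 2 - 3/2)) := by ring
      have hfinal : 12 * v * Real.exp v ≤ Real.exp (20 * v) - 1 := by
        have e1 : 1 ≤ Real.exp v := Real.one_le_exp hv0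
        have e2 : 1 + 19 * v ≤ Real.exp (19 * v) := by
          have := Real.add_one_le_exp (19 * v); linarith
        have e3 : Real.exp (20 * v) = Real.exp v * Real.exp (19 * v) := by
          rw [← Real.exp_add]; ring_nf
        nlinarith [mul_nonneg hv0 (by linarith : (0:ℝ) ≤ Real.exp v - 1)]
      have h20 : 20 * x ^ 2 * ε = 20 * v := by rw [hv]; ring
      rw [hxy, phi, h20]
      rw [mul_div_assoc', mul_div_assoc', div_le_div_iff₀ (by positivity) (by positivity)]
      have hstep : x * ε * Real.exp (-y ^ 2 / 2) * (Real.sqrt (2 * Real.pi) * (1 + x)) =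
          (x * ε * (1 + x) * Real.exp (-y ^ 2 / 2)) * Real.sqrt (2 * Real.pi) := by ring
      rw [hstep]
      have hR : (Real.exp (20 * v) - 1) * Real.exp (-x ^ 2 / 2 - 3/2) * Real.sqrt (2 * Real.pi)
          = ((Real.exp (20 * v) - 1) * Real.exp (-x ^ 2 / 2 - 3/2)) * Real.sqrt (2 * Real.pi) := by
        ring
      rw [hR]
      apply mul_le_mul_of_nonneg_right _ (Real.sqrt_nonneg _)
      calc x * ε * (1 + x) * Real.exp (-y ^ 2 / 2)
          ≤ 12 * v * Real.exp (v + (-x ^ 2 / 2 - 3/2)) := hprod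
        _ = 12 * v * Real.exp v * Real.exp (-x ^ 2 / 2 - 3/2) := by
            rw [Real.exp_add]; ring
        _ ≤ (Real.exp (20 * v) - 1) * Real.exp (-x ^ 2 / 2 - 3/2) :=
            mul_le_mul_of_nonneg_right hfinal (Real.exp_pos _).le
    have hexpu1 : 0 ≤ Real.exp (20 * x ^ 2 * ε) - 1 := by
      have := Real.one_le_exp hu0; linarith
    have hchain : (∫ t in Set.Ioc y x, phi t) ≤ (Real.exp (20 * x ^ 2 * ε) - 1) * (1 - Phi x) :=
      hS.trans (hcore.trans (mul_le_mul_of_nonneg_left hL hexpu1))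
    nlinarith [hchain, hsplit]
end

section
/- Let W > 0 a.s. with Laplace transform φ(t) = E[e^{-tW}] satisfying φ(t) ≤ C₀ (ln t)^{-1-ρ} for all t ≥ K, where C₀, K > 1 and ρ > 0. Then E[|ln W|^p · 1_{W ≤ 1}] < ∞ for every p ∈ [1, 1+ρ). -/
open MeasureTheory Real Set
open scoped ENNReal

theorem log_moment_finite_of_laplace_decay {Ω : Type*} [MeasurableSpace Ω]
    (μ : Measure Ω) [IsProbabilityMeasure μ] (W : Ω → ℝ)
    (hWm : Measurable W) (hW0 : ∀ᵐ ω ∂μ, 0 < W ω)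
    (C₀ K ρ : ℝ) (hC₀ : 1 < C₀) (hK : 1 < K) (hρ : 0 < ρ)
    (hφ : ∀ t : ℝ, K ≤ t →
      ∫ ω, Real.exp (-(t * W ω)) ∂μ ≤ C₀ * Real.log t ^ (-(1 + ρ))) :
    ∀ p : ℝ, 1 ≤ p → p < 1 + ρ →
      ∫⁻ ω in {ω | W ω ≤ 1}, ENNReal.ofReal (|Real.log (W ω)| ^ p) ∂μ < ⊤ := by
  intro p hp1 hp2
  have p_pos : (0:ℝ) < p := lt_of_lt_of_le one_pos hp1
  set f : Ω → ℝ := fun ω => max (-Real.log (W ω)) 0 with hf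
  have f_mble : Measurable f := (hWm.log.neg).max measurable_const
  have f_nn : ∀ ω, 0 ≤ f ω := fun ω => le_max_right _ _
  -- Step 1: reduce to the whole-space integral of f^p
  have step1 : ∫⁻ ω in {ω | W ω ≤ 1}, ENNReal.ofReal (|Real.log (W ω)| ^ p) ∂μ
      ≤ ∫⁻ ω, ENNReal.ofReal (f ω ^ p) ∂μ := by
    calc ∫⁻ ω in {ω | W ω ≤ 1}, ENNReal.ofReal (|Real.log (W ω)| ^ p) ∂μ
        ≤ ∫⁻ ω in {ω | W ω ≤ 1}, ENNReal.ofReal (f ω ^ p) ∂μ := by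
          refine setLIntegral_mono_ae
            (((f_mble.pow_const p).ennreal_ofReal).aemeasurable) ?_
          filter_upwards [hW0] with ω hω hmem
          have hle : W ω ≤ 1 := hmem
          have hlog : Real.log (W ω) ≤ 0 := Real.log_nonpos hω.le hle
          have : |Real.log (W ω)| = f ω := by
            rw [abs_of_nonpos hlog, hf]
            simp [max_eq_left (neg_nonneg.mpr hlog)]
          rw [this]
      _ ≤ ∫⁻ ω, ENNReal.ofReal (f ω ^ p) ∂μ := setLIntegral_le_lintegral _ _
  refine lt_of_le_of_lt step1 ?_
  rw [lintegral_rpow_eq_lintegral_meas_lt_mul μ (ae_of_all μ f_nn)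
    f_mble.aemeasurable p_pos]
  set T : ℝ := max (Real.log K) 1 with hT
  have hT1 : (1:ℝ) ≤ T := le_max_right _ _
  have hT0 : (0:ℝ) < T := lt_of_lt_of_le one_pos hT1
  -- tail bound
  have tail : ∀ t : ℝ, T ≤ t →
      μ {a | t < f a} ≤ ENNReal.ofReal (Real.exp 1 * (C₀ * t ^ (-(1 + ρ)))) := by
    intro t ht
    have ht1 : (1:ℝ) ≤ t := le_trans hT1 ht
    have hsK : K ≤ Real.exp t := by
      calc K = Real.exp (Real.log K) := (Real.exp_log (by linarith)).symm
        _ ≤ Real.exp t := Real.exp_le_exp.mpr (le_trans (le_max_left _ _) ht)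
    set g : Ω → ℝ := fun ω => Real.exp (-(Real.exp t * W ω)) with hg
    have g_mble : Measurable g := ((measurable_const.mul hWm).neg).exp
    have g_int : Integrable g μ := by
      refine Integrable.mono' (integrable_const 1) g_mble.aestronglyMeasurable ?_
      filter_upwards [hW0] with ω hω
      rw [Real.norm_eq_abs, abs_of_pos (Real.exp_pos _)]
      have hsW : 0 ≤ Real.exp t * W ω := mul_nonneg (Real.exp_pos t).le hω.le
      calc Real.exp (-(Real.exp t * W ω)) ≤ Real.exp 0 := Real.exp_le_exp.mpr (by linarith)
        _ = 1 := Real.exp_zero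
    have markov := mul_meas_ge_le_integral_of_nonneg
      (ae_of_all μ fun ω => (Real.exp_pos _).le) g_int (Real.exp (-1))
    have hsub : μ {a | t < f a} ≤ μ {x | Real.exp (-1) ≤ g x} := by
      refine measure_mono_ae ?_
      filter_upwards [hW0] with ω hω hmem
      have h1 : t < -Real.log (W ω) := by
        have hmem' : t < max (-Real.log (W ω)) 0 := hmem
        rcases lt_max_iff.mp hmem' with h | h
        · exact h
        · linarith
      have h2 : W ω < Real.exp (-t) := by
        rw [← Real.exp_log hω]
        exact Real.exp_lt_exp.mpr (by linarith)
      have h3 : Real.exp t * W ω < 1 := by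
        have := mul_lt_mul_of_pos_left h2 (Real.exp_pos t)
        rwa [← Real.exp_add, add_neg_cancel, Real.exp_zero] at this
      show Real.exp (-1) ≤ Real.exp (-(Real.exp t * W ω))
      exact Real.exp_le_exp.mpr (by linarith)
    have hb : ∫ x, g x ∂μ ≤ C₀ * t ^ (-(1 + ρ)) := by
      have := hφ (Real.exp t) hsK
      rwa [Real.log_exp] at this
    have hprod : Real.exp (-1) * Real.exp 1 = 1 := by
      rw [← Real.exp_add]; simp
    have hx : (μ {x | Real.exp (-1) ≤ g x}).toReal
        ≤ Real.exp 1 * (C₀ * t ^ (-(1 + ρ))) := by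
      nlinarith [(show Real.exp (-1) * (μ {x | Real.exp (-1) ≤ g x}).toReal ≤ ∫ x, g x ∂μ from markov), hb, hprod, Real.exp_pos (1:ℝ), Real.exp_pos (-1:ℝ),
        ENNReal.toReal_nonneg (a := μ {x | Real.exp (-1) ≤ g x})]
    calc μ {a | t < f a} ≤ μ {x | Real.exp (-1) ≤ g x} := hsub
      _ = ENNReal.ofReal ((μ {x | Real.exp (-1) ≤ g x}).toReal) :=
        (ENNReal.ofReal_toReal (measure_ne_top μ _)).symm
      _ ≤ _ := ENNReal.ofReal_le_ofReal hx
  -- split the outer integral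
  have hsplit : ∫⁻ t in Ioi (0:ℝ), μ {a | t < f a} * ENNReal.ofReal (t ^ (p - 1))
      = (∫⁻ t in Ioc (0:ℝ) T, μ {a | t < f a} * ENNReal.ofReal (t ^ (p - 1)))
        + ∫⁻ t in Ioi T, μ {a | t < f a} * ENNReal.ofReal (t ^ (p - 1)) := by
    rw [← lintegral_union measurableSet_Ioi Ioc_disjoint_Ioi_same,
      Ioc_union_Ioi_eq_Ioi hT0.le]
  have h1 : (∫⁻ t in Ioc (0:ℝ) T, μ {a | t < f a} * ENNReal.ofReal (t ^ (p - 1)))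
      ≤ ∫⁻ _ in Ioc (0:ℝ) T, ENNReal.ofReal (T ^ (p - 1)) := by
    refine setLIntegral_mono' measurableSet_Ioc fun t ht => ?_
    calc μ {a | t < f a} * ENNReal.ofReal (t ^ (p - 1))
        ≤ 1 * ENNReal.ofReal (T ^ (p - 1)) :=
          mul_le_mul' prob_le_one
            (ENNReal.ofReal_le_ofReal (Real.rpow_le_rpow ht.1.le ht.2 (by linarith)))
      _ = _ := one_mul _
  have h1' : (∫⁻ _ in Ioc (0:ℝ) T, ENNReal.ofReal (T ^ (p - 1))) < ⊤ := by
    rw [setLIntegral_const]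
    exact ENNReal.mul_lt_top ENNReal.ofReal_lt_top (measure_Ioc_lt_top)
  have h2 : (∫⁻ t in Ioi T, μ {a | t < f a} * ENNReal.ofReal (t ^ (p - 1)))
      ≤ ∫⁻ t in Ioi T, ENNReal.ofReal ((Real.exp 1 * C₀) * t ^ (p - 2 - ρ)) := by
    refine setLIntegral_mono' measurableSet_Ioi fun t ht => ?_
    have htT : T ≤ t := le_of_lt ht
    have ht0 : (0:ℝ) < t := lt_of_lt_of_le hT0 htT
    calc μ {a | t < f a} * ENNReal.ofReal (t ^ (p - 1))
        ≤ ENNReal.ofReal (Real.exp 1 * (C₀ * t ^ (-(1 + ρ))))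
            * ENNReal.ofReal (t ^ (p - 1)) := mul_le_mul_left (tail t htT) _
      _ = ENNReal.ofReal ((Real.exp 1 * (C₀ * t ^ (-(1 + ρ)))) * t ^ (p - 1)) :=
          (ENNReal.ofReal_mul (by positivity)).symm
      _ = ENNReal.ofReal ((Real.exp 1 * C₀) * t ^ (p - 2 - ρ)) := by
          congr 1
          rw [show p - 2 - ρ = -(1 + ρ) + (p - 1) by ring, Real.rpow_add ht0]
          ring
  have h2' : (∫⁻ t in Ioi T, ENNReal.ofReal ((Real.exp 1 * C₀) * t ^ (p - 2 - ρ))) < ⊤ := by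
    have hint : IntegrableOn (fun t : ℝ => (Real.exp 1 * C₀) * t ^ (p - 2 - ρ)) (Ioi T) :=
      (integrableOn_Ioi_rpow_of_lt (by linarith) hT0).const_mul _
    exact hint.setLIntegral_lt_top
  refine ENNReal.mul_lt_top ENNReal.ofReal_lt_top ?_
  rw [hsplit]
  exact ENNReal.add_lt_top.mpr ⟨lt_of_le_of_lt h1 h1', lt_of_le_of_lt h2 h2'⟩
end

section
/- Let W > 0 a.s. with Laplace transform φ(t) = E[e^{-tW}] satisfying φ(t) ≤ exp(-C₁ (ln t)^β) for all t ≥ K, for some constants C₁ > 0, β ∈ (0,1], K > 1. Then there exists a₀ > 0 such that for every a ∈ (0, a₀), E[exp(a |ln W|^β) · 1_{W ≤ 1}] < ∞. -/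
open MeasureTheory Real Set
open scoped ENNReal NNReal

lemma aux_rpow_add_one_le {β : ℝ} (hb0 : 0 ≤ β) (hb1 : β ≤ 1) (x : ℝ) (hx : 0 ≤ x) :
    (x + 1) ^ β ≤ x ^ β + 1 := by
  lift x to ℝ≥0 using hx
  have h := NNReal.rpow_add_le_add_rpow x 1 hb0 hb1
  have h1 : ((x:ℝ) + 1) ^ β = (((x + 1) ^ β : ℝ≥0) : ℝ) := by
    rw [NNReal.coe_rpow, NNReal.coe_add, NNReal.coe_one]
  have h' : (((x + 1) ^ β : ℝ≥0) : ℝ) ≤ ((x ^ β + 1 ^ β : ℝ≥0) : ℝ) := h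
  simp only [NNReal.coe_add, NNReal.one_rpow, NNReal.coe_one] at h'
  rw [h1, ← NNReal.coe_rpow]
  exact h'

lemma aux_summable_exp_neg_rpow {d β : ℝ} (hd : 0 < d) (hβ : 0 < β) :
    Summable (fun n : ℕ => Real.exp (-(d * (n : ℝ) ^ β))) := by
  have h := isLittleO_log_rpow_atTop hβ
  have h2 : ∀ᶠ x : ℝ in Filter.atTop, ‖Real.log x‖ ≤ (d / 2) * ‖x ^ β‖ :=
    h.def (by positivity)
  have h3 : ∀ᶠ n : ℕ in Filter.atTop,
      Real.exp (-(d * (n : ℝ) ^ β)) ≤ (n : ℝ) ^ (-2 : ℝ) := by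
    have h4 := (tendsto_natCast_atTop_atTop (R := ℝ)).eventually h2
    filter_upwards [h4, Filter.eventually_ge_atTop 1] with n hn hn1
    have hx1 : (1 : ℝ) ≤ (n : ℝ) := by exact_mod_cast hn1
    have hx0 : (0 : ℝ) < n := by linarith
    have hlog : Real.log n ≤ (d / 2) * (n : ℝ) ^ β := by
      rwa [Real.norm_eq_abs, Real.norm_eq_abs, abs_of_nonneg (Real.log_nonneg hx1),
        abs_of_nonneg (Real.rpow_nonneg hx0.le _)] at hn
    have hkey : -(d * (n : ℝ) ^ β) ≤ (-2) * Real.log n := by nlinarith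
    calc Real.exp (-(d * (n : ℝ) ^ β)) ≤ Real.exp ((-2) * Real.log n) :=
          Real.exp_le_exp.mpr hkey
      _ = (n : ℝ) ^ (-2 : ℝ) := by rw [Real.rpow_def_of_pos hx0, mul_comm]
  obtain ⟨M, hM⟩ := Filter.eventually_atTop.mp h3
  rw [← summable_nat_add_iff M]
  refine Summable.of_nonneg_of_le (fun n => (Real.exp_pos _).le)
    (fun n => hM _ (Nat.le_add_left M n)) ?_
  exact (summable_nat_add_iff M).mpr (Real.summable_nat_rpow.mpr (by norm_num))


lemma aux_tsum_lt_top {β a C₁ : ℝ} (hβ0 : 0 < β) (hβ1 : β ≤ 1) (ha0 : 0 < a) (haC : a < C₁)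
    (N : ℕ) (m : ℕ → ℝ≥0∞)
    (hm : ∀ n : ℕ, N ≤ n → m n ≤ ENNReal.ofReal (Real.exp 1 * Real.exp (-(C₁ * (n:ℝ) ^ β))))
    (hm1 : ∀ n, m n ≠ ⊤) :
    ∑' n : ℕ, ENNReal.ofReal (Real.exp (a * ((n:ℝ)+1) ^ β)) * m n < ⊤ := by
  have hd : 0 < C₁ - a := sub_pos.mpr haC
  have hbound : ∀ n : ℕ, N ≤ n →
      ENNReal.ofReal (Real.exp (a * ((n:ℝ)+1) ^ β)) * m n
        ≤ ENNReal.ofReal ((Real.exp 1 * Real.exp a)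
            * Real.exp (-((C₁ - a) * (n:ℝ) ^ β))) := by
    intro n hn
    have hb : Real.exp (a * ((n:ℝ)+1) ^ β) * (Real.exp 1 * Real.exp (-(C₁ * (n:ℝ) ^ β)))
        ≤ (Real.exp 1 * Real.exp a) * Real.exp (-((C₁ - a) * (n:ℝ) ^ β)) := by
      have hpow : ((n:ℝ)+1) ^ β ≤ (n:ℝ) ^ β + 1 :=
        aux_rpow_add_one_le hβ0.le hβ1 _ (Nat.cast_nonneg n)
      have h1 : a * ((n:ℝ)+1) ^ β ≤ a * (n:ℝ) ^ β + a := by nlinarith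
      have h2 : Real.exp (a * ((n:ℝ)+1) ^ β) ≤ Real.exp (a * (n:ℝ) ^ β + a) :=
        Real.exp_le_exp.mpr h1
      calc Real.exp (a * ((n:ℝ)+1) ^ β) * (Real.exp 1 * Real.exp (-(C₁ * (n:ℝ) ^ β)))
          ≤ Real.exp (a * (n:ℝ) ^ β + a) * (Real.exp 1 * Real.exp (-(C₁ * (n:ℝ) ^ β))) := by
            apply mul_le_mul_of_nonneg_right h2; positivity
        _ = (Real.exp 1 * Real.exp a) * Real.exp (-((C₁ - a) * (n:ℝ) ^ β)) := by
            rw [← Real.exp_add, ← Real.exp_add, ← Real.exp_add, ← Real.exp_add]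
            ring_nf
    calc ENNReal.ofReal (Real.exp (a * ((n:ℝ)+1) ^ β)) * m n
        ≤ ENNReal.ofReal (Real.exp (a * ((n:ℝ)+1) ^ β))
          * ENNReal.ofReal (Real.exp 1 * Real.exp (-(C₁ * (n:ℝ) ^ β))) :=
          mul_le_mul_right (hm n hn) _
      _ = ENNReal.ofReal (Real.exp (a * ((n:ℝ)+1) ^ β)
          * (Real.exp 1 * Real.exp (-(C₁ * (n:ℝ) ^ β)))) := by
            rw [← ENNReal.ofReal_mul (Real.exp_pos _).le]
      _ ≤ _ := ENNReal.ofReal_le_ofReal hb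
  have hsummable : Summable (fun n : ℕ =>
      (Real.exp 1 * Real.exp a) * Real.exp (-((C₁ - a) * (n:ℝ) ^ β))) :=
    (aux_summable_exp_neg_rpow hd hβ0).mul_left _
  have hcb : (0:ℝ) < Real.exp 1 * Real.exp a := by positivity
  set g : ℕ → ℝ≥0∞ := fun n => ENNReal.ofReal (Real.exp (a * ((n:ℝ)+1) ^ β)) * m n with hg
  have hsplit : ∀ n, g n = (if n < N then g n else 0) + (if n < N then 0 else g n) := by
    intro n; by_cases h : n < N <;> simp [h]
  calc ∑' n : ℕ, g n
      = ∑' n : ℕ, ((if n < N then g n else 0) + (if n < N then 0 else g n)) :=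
        tsum_congr hsplit
    _ = (∑' n : ℕ, if n < N then g n else 0) + ∑' n : ℕ, (if n < N then 0 else g n) :=
        ENNReal.tsum_add
    _ < ⊤ := by
        apply ENNReal.add_lt_top.mpr
        constructor
        · have heq : (∑' n : ℕ, if n < N then g n else 0)
              = ∑ n ∈ Finset.range N, (if n < N then g n else 0) := by
            refine tsum_eq_sum ?_
            intro b hb
            rw [Finset.mem_range] at hb
            simp [hb]
          rw [heq]
          apply ENNReal.sum_lt_top.mpr
          intro i _
          by_cases h : i < N
          · simp only [h, if_true]
            exact ENNReal.mul_lt_top ENNReal.ofReal_lt_top (hm1 i).lt_top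
          · simp [h]
        · calc ∑' n : ℕ, (if n < N then 0 else g n)
              ≤ ∑' n : ℕ, ENNReal.ofReal ((Real.exp 1 * Real.exp a)
                  * Real.exp (-((C₁ - a) * (n:ℝ) ^ β))) := by
                refine ENNReal.tsum_le_tsum fun n => ?_
                by_cases h : n < N
                · simp only [h, if_true]; exact zero_le
                · simp only [h, if_false]; exact hbound n (not_lt.mp h)
            _ = ENNReal.ofReal (∑' n : ℕ, (Real.exp 1 * Real.exp a)
                  * Real.exp (-((C₁ - a) * (n:ℝ) ^ β))) :=
                (ENNReal.ofReal_tsum_of_nonneg (fun n => by positivity) hsummable).symm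
            _ < ⊤ := ENNReal.ofReal_lt_top

set_option maxHeartbeats 1000000 in
theorem exp_log_moment_finite_of_laplace_decay {Ω : Type*} [MeasurableSpace Ω]
    (μ : Measure Ω) [IsProbabilityMeasure μ] (W : Ω → ℝ)
    (hWm : Measurable W) (hW0 : ∀ᵐ ω ∂μ, 0 < W ω)
    (C₁ K β : ℝ) (hC₁ : 0 < C₁) (hK : 1 < K) (hβ : β ∈ Set.Ioc (0:ℝ) 1)
    (hφ : ∀ t : ℝ, K ≤ t →
      ∫ ω, Real.exp (-(t * W ω)) ∂μ ≤ Real.exp (-(C₁ * Real.log t ^ β))) :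
    ∃ a₀ : ℝ, 0 < a₀ ∧ ∀ a ∈ Set.Ioo (0:ℝ) a₀,
      ∫⁻ ω in {ω | W ω ≤ 1},
        ENNReal.ofReal (Real.exp (a * |Real.log (W ω)| ^ β)) ∂μ < ⊤ := by
  obtain ⟨hβ0, hβ1⟩ := hβ
  refine ⟨C₁, hC₁, fun a ha => ?_⟩
  obtain ⟨ha0, haC⟩ := ha
  have hKpos : (0:ℝ) < K := lt_trans one_pos hK
  set N : ℕ := ⌈Real.log K⌉₊ with hNdef
  have hNK : K ≤ Real.exp (N : ℝ) := by
    rw [← Real.exp_log hKpos]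
    exact Real.exp_le_exp.mpr (Nat.le_ceil _)
  -- tail bound from Laplace transform (Markov)
  have tail : ∀ n : ℕ, N ≤ n → μ {ω | W ω ≤ Real.exp (-(n:ℝ))}
      ≤ ENNReal.ofReal (Real.exp 1 * Real.exp (-(C₁ * (n:ℝ) ^ β))) := by
    intro n hn
    set t : ℝ := Real.exp (n:ℝ) with htdef
    have ht : K ≤ t := le_trans hNK (Real.exp_le_exp.mpr (by exact_mod_cast hn))
    have htpos : 0 < t := Real.exp_pos _
    set B : Set Ω := {ω | W ω ≤ Real.exp (-(n:ℝ))} with hBdef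
    have hBm : MeasurableSet B := hWm measurableSet_Iic
    have hint : Integrable (fun ω => Real.exp (-(t * W ω))) μ := by
      refine (integrable_const (1:ℝ)).mono'
        (((hWm.const_mul t).neg.exp).aestronglyMeasurable) ?_
      filter_upwards [hW0] with ω hω
      rw [Real.norm_eq_abs, abs_of_pos (Real.exp_pos _)]
      rw [Real.exp_le_one_iff]
      nlinarith
    have h1 : (μ B).toReal * Real.exp (-1) ≤ ∫ ω, Real.exp (-(t * W ω)) ∂μ := by
      have hstep : ∫ _ω in B, Real.exp (-1) ∂μ ≤ ∫ ω in B, Real.exp (-(t * W ω)) ∂μ := by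
        refine setIntegral_mono_on (integrableOn_const (measure_ne_top _ _))
          hint.integrableOn hBm ?_
        intro ω hω
        have hω' : W ω ≤ Real.exp (-(n:ℝ)) := hω
        apply Real.exp_le_exp.mpr
        have h2 : t * W ω ≤ t * Real.exp (-(n:ℝ)) :=
          mul_le_mul_of_nonneg_left hω' htpos.le
        have h3 : t * Real.exp (-(n:ℝ)) = 1 := by
          rw [htdef, ← Real.exp_add]
          simp
        linarith
      have hle2 : ∫ ω in B, Real.exp (-(t * W ω)) ∂μ ≤ ∫ ω, Real.exp (-(t * W ω)) ∂μ :=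
        setIntegral_le_integral hint
          (Filter.Eventually.of_forall fun ω => (Real.exp_pos _).le)
      have hconst : ∫ _ω in B, Real.exp (-1) ∂μ = (μ B).toReal * Real.exp (-1) := by
        rw [setIntegral_const]; simp [smul_eq_mul, Measure.real]
      linarith
    have h2 : (μ B).toReal * Real.exp (-1) ≤ Real.exp (-(C₁ * (n:ℝ) ^ β)) := by
      have := hφ t ht
      rw [htdef, Real.log_exp] at this
      exact h1.trans this
    have h3 : (μ B).toReal ≤ Real.exp 1 * Real.exp (-(C₁ * (n:ℝ) ^ β)) := by
      have he : Real.exp (-1) * Real.exp 1 = 1 := by rw [← Real.exp_add]; simp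
      calc (μ B).toReal = (μ B).toReal * (Real.exp (-1) * Real.exp 1) := by rw [he, mul_one]
        _ = ((μ B).toReal * Real.exp (-1)) * Real.exp 1 := by ring
        _ ≤ Real.exp (-(C₁ * (n:ℝ) ^ β)) * Real.exp 1 :=
            mul_le_mul_of_nonneg_right h2 (Real.exp_pos 1).le
        _ = Real.exp 1 * Real.exp (-(C₁ * (n:ℝ) ^ β)) := mul_comm _ _
    calc μ B = ENNReal.ofReal (μ B).toReal := (ENNReal.ofReal_toReal (measure_ne_top μ B)).symm
      _ ≤ _ := ENNReal.ofReal_le_ofReal h3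
  -- partition of {0 < W ≤ 1}
  set A : ℕ → Set Ω := fun n =>
    {ω | W ω ∈ Set.Ioc (Real.exp (-((n:ℝ)+1))) (Real.exp (-(n:ℝ)))} with hAdef
  have hAm : ∀ n, MeasurableSet (A n) := fun n => hWm measurableSet_Ioc
  have hkeydisj : ∀ m n : ℕ, m < n → Disjoint (A m) (A n) := by
    intro m n h
    rw [Set.disjoint_left]
    rintro ω hm hn'
    simp only [hAdef, Set.mem_setOf_eq, Set.mem_Ioc] at hm hn'
    have hle : Real.exp (-(n:ℝ)) ≤ Real.exp (-((m:ℝ)+1)) := by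
      apply Real.exp_le_exp.mpr
      have : (m:ℝ) + 1 ≤ (n:ℝ) := by exact_mod_cast h
      linarith
    linarith [hm.1, hn'.2]
  have hAdisj : Pairwise (Function.onFun Disjoint A) := by
    intro m n hmn
    rcases hmn.lt_or_gt with h | h
    · exact hkeydisj m n h
    · exact (hkeydisj n m h).symm
  have hUnion : {ω | 0 < W ω ∧ W ω ≤ 1} = ⋃ n, A n := by
    ext ω
    simp only [hAdef, Set.mem_setOf_eq, Set.mem_iUnion, Set.mem_Ioc]
    constructor
    · rintro ⟨h0, h1⟩
      have hl : 0 ≤ -Real.log (W ω) := by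
        have := Real.log_nonpos (le_of_lt h0) h1
        linarith
      refine ⟨⌊-Real.log (W ω)⌋₊, ?_, ?_⟩
      · have hlt : -Real.log (W ω) < (⌊-Real.log (W ω)⌋₊ : ℝ) + 1 := Nat.lt_floor_add_one _
        calc Real.exp (-((⌊-Real.log (W ω)⌋₊ : ℝ) + 1))
            < Real.exp (Real.log (W ω)) := Real.exp_lt_exp.mpr (by linarith)
          _ = W ω := Real.exp_log h0
      · have hfl : (⌊-Real.log (W ω)⌋₊ : ℝ) ≤ -Real.log (W ω) := Nat.floor_le hl
        calc W ω = Real.exp (Real.log (W ω)) := (Real.exp_log h0).symm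
          _ ≤ Real.exp (-(⌊-Real.log (W ω)⌋₊ : ℝ)) := Real.exp_le_exp.mpr (by linarith)
    · rintro ⟨n, h1, h2⟩
      refine ⟨lt_trans (Real.exp_pos _) h1, h2.trans ?_⟩
      rw [Real.exp_le_one_iff]
      exact neg_nonpos.mpr (Nat.cast_nonneg n)
  have hsets : {ω | W ω ≤ 1} =ᵐ[μ] ⋃ n, A n := by
    rw [← hUnion]
    rw [Filter.eventuallyEq_set]
    filter_upwards [hW0] with ω hω
    exact ⟨fun h => ⟨hω, h⟩, fun h => h.2⟩
  set f : Ω → ℝ≥0∞ := fun ω => ENNReal.ofReal (Real.exp (a * |Real.log (W ω)| ^ β)) with hfdef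
  have hstep1 : ∫⁻ ω in {ω | W ω ≤ 1}, f ω ∂μ = ∑' n, ∫⁻ ω in A n, f ω ∂μ := by
    rw [Measure.restrict_congr_set hsets]
    exact lintegral_iUnion hAm hAdisj _
  have hstep2 : ∀ n : ℕ, ∫⁻ ω in A n, f ω ∂μ
      ≤ ENNReal.ofReal (Real.exp (a * ((n:ℝ)+1) ^ β)) * μ (A n) := by
    intro n
    have : ∫⁻ ω in A n, f ω ∂μ
        ≤ ∫⁻ _ω in A n, ENNReal.ofReal (Real.exp (a * ((n:ℝ)+1) ^ β)) ∂μ := by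
      refine setLIntegral_mono measurable_const ?_
      intro ω hω
      simp only [hAdef, Set.mem_setOf_eq, Set.mem_Ioc] at hω
      obtain ⟨hlo, hhi⟩ := hω
      have h0 : 0 < W ω := lt_trans (Real.exp_pos _) hlo
      have hlog1 : -((n:ℝ)+1) < Real.log (W ω) := by
        have := Real.log_lt_log (Real.exp_pos _) hlo
        rwa [Real.log_exp] at this
      have hlog2 : Real.log (W ω) ≤ -(n:ℝ) := by
        have := Real.log_le_log h0 hhi
        rwa [Real.log_exp] at this
      have habs : |Real.log (W ω)| ≤ (n:ℝ) + 1 := by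
        rw [abs_le]
        constructor
        · linarith
        · have : (0:ℝ) ≤ (n:ℝ) := Nat.cast_nonneg n
          linarith
      have hr : |Real.log (W ω)| ^ β ≤ ((n:ℝ)+1) ^ β :=
        Real.rpow_le_rpow (abs_nonneg _) habs hβ0.le
      exact ENNReal.ofReal_le_ofReal
        (Real.exp_le_exp.mpr (mul_le_mul_of_nonneg_left hr ha0.le))
    rwa [setLIntegral_const] at this
  have hstep3 : ∫⁻ ω in {ω | W ω ≤ 1}, f ω ∂μ
      ≤ ∑' n : ℕ, ENNReal.ofReal (Real.exp (a * ((n:ℝ)+1) ^ β)) * μ (A n) := by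
    rw [hstep1]
    exact ENNReal.tsum_le_tsum hstep2
  have hμle : ∀ n : ℕ, N ≤ n → μ (A n)
      ≤ ENNReal.ofReal (Real.exp 1 * Real.exp (-(C₁ * (n:ℝ) ^ β))) := by
    intro n hn
    refine le_trans (measure_mono ?_) (tail n hn)
    intro ω hω
    simp only [hAdef, Set.mem_setOf_eq, Set.mem_Ioc] at hω ⊢
    exact hω.2
  exact lt_of_le_of_lt hstep3
    (aux_tsum_lt_top hβ0 hβ1 ha0 haC N (fun n => μ (A n)) hμle (fun n => measure_ne_top μ _))
end
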